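/- There exists a constant C > 0 such that for all ℓ ∈ ℕ, the total number of bridge-lists of combined length ℓ with strictly decreasing heights (of any list length j between 1 and ℓ) is at most exp(C·ℓ^{1/2}) · μ^ℓ. -/

import Mathlib

/-- A self-avoiding walk of length `n` on `ℤ²`, starting at the origin, with
nearest-neighbour steps, padded to be constant after time `n`. -/
def IsSAW (n : ℕ) (γ : ℕ → ℤ × ℤ) : Prop :=
  γ 0 = (0, 0) ∧
  (∀ i < n, |(γ (i + 1)).1 - (γ i).1| + |(γ (i + 1)).2 - (γ i).2| = 1) ∧
  (∀ i ≤ n, ∀ j ≤ n, γ i = γ j → i = j) ∧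
  (∀ i, n ≤ i → γ i = γ n)

/-- The number of self-avoiding walks of length `n` on `ℤ²` starting at the origin. -/
noncomputable def cSAW (n : ℕ) : ℕ := Nat.card {γ : ℕ → ℤ × ℤ // IsSAW n γ}

/-- The connective constant `μ` of `ℤ²`, i.e. `lim_n cSAW n ^ (1/n)`, which by
submultiplicativity equals the infimum `⨅_{n ≥ 1} (cSAW n)^(1/n)`. -/
noncomputable def mu : ℝ := ⨅ n : ℕ, ((cSAW (n + 1) : ℝ)) ^ ((1 : ℝ) / (n + 1))

/-- A self-avoiding bridge of length `n` on `ℤ²`: a self-avoiding walk `γ` from the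
origin with `0 < y(γ k) ≤ y(γ n)` for all `1 ≤ k ≤ n`. -/
def IsBridge (n : ℕ) (γ : ℕ → ℤ × ℤ) : Prop :=
  IsSAW n γ ∧ ∀ k : ℕ, 0 < k → k ≤ n → 0 < (γ k).2 ∧ (γ k).2 ≤ (γ n).2

/-- The number of self-avoiding bridges of length `n` on `ℤ²`. -/
noncomputable def cSAB (n : ℕ) : ℕ := Nat.card {γ : ℕ → ℤ × ℤ // IsBridge n γ}

/-- A half-space self-avoiding walk of length `n` on `ℤ²`: a self-avoiding walk `γ`
from the origin with `y(γ k) > 0` for all `0 < k ≤ n`. -/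
def IsHSW (n : ℕ) (γ : ℕ → ℤ × ℤ) : Prop :=
  IsSAW n γ ∧ ∀ k : ℕ, 0 < k → k ≤ n → 0 < (γ k).2

/-- The number of half-space self-avoiding walks of length `n` on `ℤ²`. -/
noncomputable def cHSW (n : ℕ) : ℕ := Nat.card {γ : ℕ → ℤ × ℤ // IsHSW n γ}

/-- The bridge-product space `BΠ_{ℓ,j}`: ordered lists of `j` self-avoiding bridges
(recorded with their lengths) whose lengths sum to `ℓ` and whose heights form a
strictly decreasing sequence. -/
def BPi (ℓ j : ℕ) : Set (Fin j → ℕ × (ℕ → ℤ × ℤ)) :=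
  {b | (∀ i, IsBridge (b i).1 (b i).2) ∧ (∑ i, (b i).1) = ℓ ∧
    StrictAnti (fun i : Fin j => ((b i).2 (b i).1).2)}

/-!
Concatenating the bridges of a list with strictly decreasing heights gives one bridge of length
`ℓ`, and the list can be read back from that bridge together with the set of component heights:
the first component is the one of largest height `h`, and it ends at the last time the
concatenation is at height at most `h`. The height set consists of distinct naturals with sum at
most `ℓ`; comparing with the generating function `∏ₖ (1 + xᵏ) ≤ exp (1 / (1 - x))` at
`x = exp (-1 / √ℓ)` there are at most `exp (3√ℓ)` of them. Finally, concatenation and splitting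
give `cSAB n ^ m ≤ cSAB (n * m) ≤ cSAW (n * m) ≤ cSAW m ^ n`, hence `cSAB n ≤ μ ^ n`.
-/

open Finset

section Walks

variable {m n : ℕ} {γ δ : ℕ → ℤ × ℤ}

theorem IsSAW.apply_min (h : IsSAW n γ) (t : ℕ) : γ (min t n) = γ t := by
  rcases le_total t n with ht | ht
  · rw [min_eq_left ht]
  · rw [min_eq_right ht, h.2.2.2 t ht]

theorem IsSAW.abs_add_abs_le (h : IsSAW n γ) {t : ℕ} (ht : t ≤ n) :
    |(γ t).1| + |(γ t).2| ≤ t := by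
  induction t with
  | zero => simp [h.1]
  | succ t ih =>
    have hstep := h.2.1 t (by omega)
    have h1 := abs_sub_abs_le_abs_sub (γ (t + 1)).1 (γ t).1
    have h2 := abs_sub_abs_le_abs_sub (γ (t + 1)).2 (γ t).2
    push_cast
    linarith [ih (by omega)]

theorem setOf_isSAW_finite (n : ℕ) : {γ | IsSAW n γ}.Finite := by
  refine Set.Finite.of_finite_image (f := fun γ (i : Fin (n + 1)) => γ i) ?_ ?_
  · refine (Set.Finite.pi (t := fun _ => Set.Icc ((-n, -n) : ℤ × ℤ) (n, n))
      fun _ => Set.finite_Icc _ _).subset ?_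
    rintro _ ⟨γ, hγ, rfl⟩ i -
    have hi : (i : ℤ) ≤ n := by exact_mod_cast Nat.lt_succ_iff.mp i.2
    have hsum := hγ.abs_add_abs_le (Nat.lt_succ_iff.mp i.2)
    have h1 := abs_le.mp (show |(γ i).1| ≤ n by linarith [abs_nonneg (γ i).2])
    have h2 := abs_le.mp (show |(γ i).2| ≤ n by linarith [abs_nonneg (γ i).1])
    exact ⟨⟨h1.1, h2.1⟩, ⟨h1.2, h2.2⟩⟩
  · intro γ hγ δ hδ h
    funext t
    rw [← hγ.apply_min, ← hδ.apply_min]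
    exact congrFun h ⟨min t n, by omega⟩

instance (n : ℕ) : Finite {γ : ℕ → ℤ × ℤ // IsSAW n γ} := (setOf_isSAW_finite n).to_subtype

instance (n : ℕ) : Finite {γ : ℕ → ℤ × ℤ // IsBridge n γ} :=
  ((setOf_isSAW_finite n).subset fun _ h => h.1).to_subtype

theorem cSAB_le_cSAW (n : ℕ) : cSAB n ≤ cSAW n :=
  Nat.card_mono (setOf_isSAW_finite n) fun _ h => h.1

theorem IsBridge.snd_nonneg (h : IsBridge n γ) {t : ℕ} (ht : t ≤ n) : 0 ≤ (γ t).2 := by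
  rcases Nat.eq_zero_or_pos t with rfl | ht0
  · simp [h.1.1]
  · exact (h.2 t ht0 ht).1.le

theorem IsBridge.snd_le (h : IsBridge n γ) {t : ℕ} (ht : t ≤ n) : (γ t).2 ≤ (γ n).2 := by
  rcases Nat.eq_zero_or_pos t with rfl | ht0
  · simpa [h.1.1] using h.snd_nonneg le_rfl
  · exact (h.2 t ht0 ht).2

theorem IsBridge.height_le_length (h : IsBridge n γ) : (γ n).2 ≤ n := by
  linarith [h.1.abs_add_abs_le le_rfl, abs_nonneg (γ n).1, le_abs_self (γ n).2]

def appendWalk (m : ℕ) (γ δ : ℕ → ℤ × ℤ) : ℕ → ℤ × ℤ := fun t => γ (min t m) + δ (t - m)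

def prefixWalk (m : ℕ) (γ : ℕ → ℤ × ℤ) : ℕ → ℤ × ℤ := fun t => γ (min t m)

def suffixWalk (m : ℕ) (γ : ℕ → ℤ × ℤ) : ℕ → ℤ × ℤ := fun t => γ (m + t) - γ m

theorem appendWalk_of_le (hδ : δ 0 = 0) {t : ℕ} (ht : t ≤ m) : appendWalk m γ δ t = γ t := by
  simp [appendWalk, min_eq_left ht, Nat.sub_eq_zero_of_le ht, hδ]

theorem appendWalk_of_ge {t : ℕ} (ht : m ≤ t) : appendWalk m γ δ t = γ m + δ (t - m) := by
  simp [appendWalk, min_eq_right ht]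

theorem appendWalk_prefixWalk_suffixWalk :
    appendWalk m (prefixWalk m γ) (suffixWalk m γ) = γ := by
  funext t
  rcases le_total t m with ht | ht
  · simp [appendWalk, prefixWalk, suffixWalk, min_eq_left ht, Nat.sub_eq_zero_of_le ht]
  · simp [appendWalk, prefixWalk, suffixWalk, min_eq_right ht, Nat.add_sub_cancel' ht]

theorem prefixWalk_appendWalk (hγ : IsSAW m γ) (hδ : δ 0 = 0) :
    prefixWalk m (appendWalk m γ δ) = γ := by
  funext t
  rw [prefixWalk, appendWalk_of_le hδ (min_le_right t m), hγ.apply_min]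

theorem suffixWalk_appendWalk (hδ : δ 0 = 0) : suffixWalk m (appendWalk m γ δ) = δ := by
  funext t
  simp [suffixWalk, appendWalk_of_ge, hδ]

theorem isSAW_prefixWalk (h : IsSAW (m + n) γ) : IsSAW m (prefixWalk m γ) := by
  refine ⟨by simpa [prefixWalk] using h.1, fun i hi => ?_, fun u hu v hv huv => ?_,
    fun i hi => ?_⟩
  · simpa [prefixWalk, min_eq_left hi.le, min_eq_left (Nat.succ_le_of_lt hi)] using
      h.2.1 i (by omega)
  · simp only [prefixWalk, min_eq_left hu, min_eq_left hv] at huv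
    exact h.2.2.1 u (by omega) v (by omega) huv
  · simp [prefixWalk, min_eq_right hi]

theorem isSAW_suffixWalk (h : IsSAW (m + n) γ) : IsSAW n (suffixWalk m γ) := by
  refine ⟨sub_self (γ m), fun i hi => ?_, fun u hu v hv huv => ?_, fun i hi => ?_⟩
  · simpa [suffixWalk, ← add_assoc] using h.2.1 (m + i) (by omega)
  · have := h.2.2.1 (m + u) (by omega) (m + v) (by omega) (sub_left_injective huv)
    omega
  · simp only [suffixWalk, h.2.2.2 (m + i) (by omega)]

theorem cSAW_add_le (m n : ℕ) : cSAW (m + n) ≤ cSAW m * cSAW n := by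
  rw [cSAW, cSAW, cSAW, ← Nat.card_prod]
  refine Nat.card_le_card_of_injective
    (fun γ => (⟨prefixWalk m γ.1, isSAW_prefixWalk γ.2⟩,
      ⟨suffixWalk m γ.1, isSAW_suffixWalk γ.2⟩)) ?_
  intro γ δ h
  simp only [Prod.mk.injEq, Subtype.mk.injEq] at h
  rw [Subtype.ext_iff, ← appendWalk_prefixWalk_suffixWalk (γ := γ.1) (m := m), h.1, h.2,
    appendWalk_prefixWalk_suffixWalk]

theorem cSAW_mul_le_pow (m : ℕ) {k : ℕ} (hk : 0 < k) : cSAW (m * k) ≤ cSAW m ^ k := by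
  induction k, hk using Nat.le_induction with
  | base => simp
  | succ k _ ih =>
    calc cSAW (m * (k + 1)) = cSAW (m * k + m) := by rw [mul_add_one]
      _ ≤ cSAW (m * k) * cSAW m := cSAW_add_le _ _
      _ ≤ cSAW m ^ k * cSAW m := Nat.mul_le_mul_right _ ih
      _ = cSAW m ^ (k + 1) := (pow_succ _ _).symm

theorem isSAW_appendWalk (hγ : IsSAW m γ) (hδ : IsSAW n δ)
    (hsep : ∀ s ≤ m, ∀ t, 0 < t → t ≤ n → γ s ≠ γ m + δ t) :
    IsSAW (m + n) (appendWalk m γ δ) := by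
  have hδ0 : δ 0 = 0 := hδ.1
  refine ⟨?_, fun i hi => ?_, fun u hu v hv huv => ?_, fun i hi => ?_⟩
  · rw [appendWalk_of_le hδ0 (Nat.zero_le m)]
    exact hγ.1
  · rcases lt_or_ge i m with him | him
    · rw [appendWalk_of_le hδ0 him, appendWalk_of_le hδ0 him.le]
      exact hγ.2.1 i him
    · rw [appendWalk_of_ge (by omega : m ≤ i + 1), appendWalk_of_ge him, Nat.sub_add_comm him]
      simpa using hδ.2.1 (i - m) (by omega)
  · wlog huv' : u ≤ v generalizing u v
    · exact (this v hv u hu huv.symm (by omega)).symm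
    rcases le_or_gt v m with hvm | hvm
    · rw [appendWalk_of_le hδ0 (huv'.trans hvm), appendWalk_of_le hδ0 hvm] at huv
      exact hγ.2.2.1 u (by omega) v hvm huv
    rw [appendWalk_of_ge hvm.le] at huv
    rcases le_or_gt u m with hum | hum
    · rw [appendWalk_of_le hδ0 hum] at huv
      exact absurd huv (hsep u hum (v - m) (by omega) (by omega))
    · rw [appendWalk_of_ge hum.le] at huv
      have := hδ.2.2.1 (u - m) (by omega) (v - m) (by omega) (add_left_cancel huv)
      omega
  · rw [appendWalk_of_ge (by omega : m ≤ i), appendWalk_of_ge (Nat.le_add_right m n),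
      hδ.2.2.2 (i - m) (by omega), Nat.add_sub_cancel_left]

theorem isBridge_appendWalk (hγ : IsBridge m γ) (hδ : IsBridge n δ) :
    IsBridge (m + n) (appendWalk m γ δ) := by
  have hend : appendWalk m γ δ (m + n) = γ m + δ n := by
    rw [appendWalk_of_ge (Nat.le_add_right m n), Nat.add_sub_cancel_left]
  refine ⟨isSAW_appendWalk hγ.1 hδ.1 fun s hs t ht0 htn h => ?_, fun k hk0 hkn => ?_⟩
  · have := congrArg Prod.snd h
    rw [Prod.snd_add] at this
    linarith [hγ.snd_le hs, (hδ.2 t ht0 htn).1]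
  · rw [hend, Prod.snd_add]
    have hγm := hγ.snd_nonneg le_rfl
    have hδn := hδ.snd_nonneg le_rfl
    rcases le_or_gt k m with hkm | hkm
    · rw [appendWalk_of_le hδ.1.1 hkm]
      exact ⟨(hγ.2 k hk0 hkm).1, by linarith [hγ.snd_le hkm]⟩
    · rw [appendWalk_of_ge hkm.le, Prod.snd_add]
      have := hδ.2 (k - m) (by omega) (by omega)
      constructor <;> linarith [this.1, this.2]

theorem cSAB_mul_cSAB_le (m n : ℕ) : cSAB m * cSAB n ≤ cSAB (m + n) := by
  rw [cSAB, cSAB, cSAB, ← Nat.card_prod]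
  refine Nat.card_le_card_of_injective
    (fun p => ⟨appendWalk m p.1.1 p.2.1, isBridge_appendWalk p.1.2 p.2.2⟩) ?_
  rintro ⟨⟨γ, hγ⟩, ⟨δ, hδ⟩⟩ ⟨⟨γ', hγ'⟩, ⟨δ', hδ'⟩⟩ h
  simp only [Subtype.mk.injEq] at h
  have hγγ' : γ = γ' := by
    rw [← prefixWalk_appendWalk hγ.1 hδ.1.1, h, prefixWalk_appendWalk hγ'.1 hδ'.1.1]
  have hδδ' : δ = δ' := by
    rw [← suffixWalk_appendWalk (m := m) (γ := γ) hδ.1.1, h, suffixWalk_appendWalk hδ'.1.1]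
  subst hγγ' hδδ'
  rfl

theorem cSAB_pow_le (n : ℕ) {k : ℕ} (hk : 0 < k) : cSAB n ^ k ≤ cSAB (n * k) := by
  induction k, hk using Nat.le_induction with
  | base => simp
  | succ k _ ih =>
    calc cSAB n ^ (k + 1) = cSAB n ^ k * cSAB n := pow_succ _ _
      _ ≤ cSAB (n * k) * cSAB n := Nat.mul_le_mul_right _ ih
      _ ≤ cSAB (n * k + n) := cSAB_mul_cSAB_le _ _
      _ = cSAB (n * (k + 1)) := by rw [mul_add_one]

theorem cSAB_pow_le_cSAW_pow (hn : 0 < n) (hm : 0 < m) : cSAB n ^ m ≤ cSAW m ^ n :=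
  calc cSAB n ^ m ≤ cSAB (n * m) := cSAB_pow_le n hm
    _ ≤ cSAW (n * m) := cSAB_le_cSAW _
    _ = cSAW (m * n) := by rw [mul_comm]
    _ ≤ cSAW m ^ n := cSAW_mul_le_pow m hn

theorem rpow_one_div_le_rpow_one_div_of_pow_le_pow {a b : ℝ} (ha : 0 ≤ a) (hb : 0 ≤ b)
    (hm : m ≠ 0) (hn : n ≠ 0) (h : a ^ m ≤ b ^ n) : a ^ ((1 : ℝ) / n) ≤ b ^ ((1 : ℝ) / m) := by
  have ha' : (a ^ ((1 : ℝ) / n)) ^ (n * m) = a ^ m := by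
    rw [pow_mul, one_div, Real.rpow_inv_natCast_pow ha hn]
  have hb' : (b ^ ((1 : ℝ) / m)) ^ (n * m) = b ^ n := by
    rw [mul_comm, pow_mul, one_div, Real.rpow_inv_natCast_pow hb hm]
  rwa [← pow_le_pow_iff_left₀ (by positivity) (by positivity) (mul_ne_zero hn hm), ha', hb']

theorem cSAB_le_mu_pow (hn : 0 < n) : (cSAB n : ℝ) ≤ mu ^ n := by
  have hroot : (cSAB n : ℝ) ^ ((1 : ℝ) / n) ≤ mu := le_ciInf fun k => by
    have := rpow_one_div_le_rpow_one_div_of_pow_le_pow (Nat.cast_nonneg (cSAB n))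
      (Nat.cast_nonneg (cSAW (k + 1))) k.succ_ne_zero hn.ne'
      (by exact_mod_cast cSAB_pow_le_cSAW_pow hn k.succ_pos)
    rwa [Nat.cast_succ] at this
  calc (cSAB n : ℝ) = ((cSAB n : ℝ) ^ ((1 : ℝ) / n)) ^ n := by
        rw [one_div, Real.rpow_inv_natCast_pow (Nat.cast_nonneg _) hn.ne']
    _ ≤ mu ^ n := pow_le_pow_left₀ (by positivity) hroot n

end Walks

section BridgeLists

def bridgeHeight (p : ℕ × (ℕ → ℤ × ℤ)) : ℕ := (p.2 p.1).2.toNat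

def appendWalks : List (ℕ × (ℕ → ℤ × ℤ)) → ℕ → ℤ × ℤ
  | [] => 0
  | p :: L => appendWalk p.1 p.2 (appendWalks L)

def heightSet (L : List (ℕ × (ℕ → ℤ × ℤ))) : Finset ℕ := (L.map bridgeHeight).toFinset

variable {m n : ℕ} {γ δ : ℕ → ℤ × ℤ} {p : ℕ × (ℕ → ℤ × ℤ)} {L : List (ℕ × (ℕ → ℤ × ℤ))}

theorem IsBridge.natCast_bridgeHeight (h : IsBridge p.1 p.2) :
    (bridgeHeight p : ℤ) = (p.2 p.1).2 :=
  Int.toNat_of_nonneg (h.snd_nonneg le_rfl)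

theorem IsBridge.bridgeHeight_le (h : IsBridge p.1 p.2) : bridgeHeight p ≤ p.1 :=
  Int.toNat_le.2 h.height_le_length

theorem isBridge_appendWalks (hL : ∀ p ∈ L, IsBridge p.1 p.2) :
    IsBridge (L.map Prod.fst).sum (appendWalks L) := by
  induction L with
  | nil =>
    exact ⟨⟨rfl, by simp, by simp, fun _ _ => rfl⟩, fun k hk hkn => by simp at hkn; omega⟩
  | cons p L ih =>
    rw [List.map_cons, List.sum_cons]
    exact isBridge_appendWalk (hL p List.mem_cons_self)
      (ih fun q hq => hL q (List.mem_cons_of_mem p hq))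

theorem heightSet_cons : heightSet (p :: L) = insert (bridgeHeight p) (heightSet L) := by
  simp [heightSet]

theorem lt_bridgeHeight_of_mem_heightSet
    (hpw : (p :: L).Pairwise fun p q => bridgeHeight q < bridgeHeight p) {s : ℕ}
    (hs : s ∈ heightSet L) : s < bridgeHeight p := by
  obtain ⟨q, hq, rfl⟩ := List.mem_map.1 (List.mem_toFinset.1 hs)
  exact List.rel_of_pairwise_cons hpw hq

theorem isGreatest_heightSet_cons
    (hpw : (p :: L).Pairwise fun p q => bridgeHeight q < bridgeHeight p) :
    IsGreatest (heightSet (p :: L) : Set ℕ) (bridgeHeight p) := by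
  refine ⟨by simp [heightSet_cons], fun s hs => ?_⟩
  rw [heightSet_cons, coe_insert, Set.mem_insert_iff] at hs
  rcases hs with rfl | hs
  · exact le_rfl
  · exact (lt_bridgeHeight_of_mem_heightSet hpw hs).le

theorem heightSet_eq_erase
    (hpw : (p :: L).Pairwise fun p q => bridgeHeight q < bridgeHeight p) :
    heightSet L = (heightSet (p :: L)).erase (bridgeHeight p) := by
  rw [heightSet_cons, erase_insert fun h => (lt_bridgeHeight_of_mem_heightSet hpw h).false]

theorem nodup_map_bridgeHeight (hpw : L.Pairwise fun p q => bridgeHeight q < bridgeHeight p) :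
    (L.map bridgeHeight).Nodup :=
  List.pairwise_map.2 (hpw.imp fun h => h.ne')

theorem card_heightSet (hpw : L.Pairwise fun p q => bridgeHeight q < bridgeHeight p) :
    #(heightSet L) = L.length := by
  rw [heightSet, List.toFinset_card_of_nodup (nodup_map_bridgeHeight hpw), List.length_map]

theorem sum_heightSet_le (hL : ∀ p ∈ L, IsBridge p.1 p.2)
    (hpw : L.Pairwise fun p q => bridgeHeight q < bridgeHeight p) :
    ∑ i ∈ heightSet L, i ≤ (L.map Prod.fst).sum := by
  rw [heightSet, List.sum_toFinset _ (nodup_map_bridgeHeight hpw), List.map_id']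
  exact List.sum_le_sum fun p hp => (hL p hp).bridgeHeight_le

theorem IsBridge.appendWalk_snd_le_iff (hγ : IsBridge m γ) (hδ : IsBridge n δ) {s : ℕ}
    (hs : s ≤ m + n) : (appendWalk m γ δ s).2 ≤ (γ m).2 ↔ s ≤ m := by
  refine ⟨fun h => ?_, fun h => ?_⟩
  · by_contra! hsm
    rw [appendWalk_of_ge hsm.le, Prod.snd_add] at h
    linarith [(hδ.2 (s - m) (by omega) (by omega)).1]
  · rw [appendWalk_of_le hδ.1.1 h]
    exact hγ.snd_le h

theorem IsBridge.eq_of_appendWalk_eq {m' n' : ℕ} {γ' δ' : ℕ → ℤ × ℤ} (hγ : IsBridge m γ)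
    (hγ' : IsBridge m' γ') (hδ : IsBridge n δ) (hδ' : IsBridge n' δ') (hlen : m + n = m' + n')
    (hheight : (γ m).2 = (γ' m').2) (h : appendWalk m γ δ = appendWalk m' γ' δ') :
    m = m' ∧ γ = γ' ∧ δ = δ' := by
  have hm : m = m' := by
    apply le_antisymm
    · rw [← hγ'.appendWalk_snd_le_iff hδ' (s := m) (by omega), ← h, ← hheight,
        hγ.appendWalk_snd_le_iff hδ (by omega)]
    · rw [← hγ.appendWalk_snd_le_iff hδ (s := m') (by omega), h, hheight,
        hγ'.appendWalk_snd_le_iff hδ' (by omega)]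
  subst hm
  refine ⟨rfl, ?_, ?_⟩
  · rw [← prefixWalk_appendWalk hγ.1 hδ.1.1, h, prefixWalk_appendWalk hγ'.1 hδ'.1.1]
  · rw [← suffixWalk_appendWalk (m := m) (γ := γ) hδ.1.1, h, suffixWalk_appendWalk hδ'.1.1]

theorem eq_of_appendWalks_eq : ∀ {L L' : List (ℕ × (ℕ → ℤ × ℤ))},
    (∀ p ∈ L, IsBridge p.1 p.2) → (∀ p ∈ L', IsBridge p.1 p.2) →
    L.Pairwise (fun p q => bridgeHeight q < bridgeHeight p) →
    L'.Pairwise (fun p q => bridgeHeight q < bridgeHeight p) →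
    (L.map Prod.fst).sum = (L'.map Prod.fst).sum → appendWalks L = appendWalks L' →
    heightSet L = heightSet L' → L = L'
  | [], [], _, _, _, _, _, _, _ => rfl
  | [], _ :: _, _, _, _, _, _, _, hset =>
    absurd hset.symm (heightSet_cons ▸ insert_ne_empty _ _)
  | _ :: _, [], _, _, _, _, _, _, hset => absurd hset (heightSet_cons ▸ insert_ne_empty _ _)
  | p :: L, p' :: L', hL, hL', hpw, hpw', hlen, hwalk, hset => by
    have hp := hL p List.mem_cons_self
    have hp' := hL' p' List.mem_cons_self
    have hLtail : ∀ q ∈ L, IsBridge q.1 q.2 := fun q hq => hL q (List.mem_cons_of_mem p hq)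
    have hL'tail : ∀ q ∈ L', IsBridge q.1 q.2 :=
      fun q hq => hL' q (List.mem_cons_of_mem p' hq)
    have hheight : bridgeHeight p = bridgeHeight p' :=
      (isGreatest_heightSet_cons hpw).unique (hset ▸ isGreatest_heightSet_cons hpw')
    obtain ⟨hlen₁, hwalk₁, hwalks⟩ := hp.eq_of_appendWalk_eq hp' (isBridge_appendWalks hLtail)
      (isBridge_appendWalks hL'tail) (by simpa using hlen)
      (by rw [← hp.natCast_bridgeHeight, ← hp'.natCast_bridgeHeight, hheight]) hwalk
    have htail := eq_of_appendWalks_eq hLtail hL'tail hpw.of_cons hpw'.of_cons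
      (by simp only [List.map_cons, List.sum_cons, hlen₁] at hlen; omega) hwalks
      (by rw [heightSet_eq_erase hpw, heightSet_eq_erase hpw', hset, hheight])
    rw [Prod.ext hlen₁ hwalk₁, htail]

end BridgeLists

section BPi

variable {ℓ j : ℕ} {b : Fin j → ℕ × (ℕ → ℤ × ℤ)}

theorem BPi.isBridge_of_mem_ofFn (hb : b ∈ BPi ℓ j) :
    ∀ p ∈ List.ofFn b, IsBridge p.1 p.2 := by
  intro p hp
  obtain ⟨i, rfl⟩ := List.mem_ofFn.1 hp
  exact hb.1 i

theorem BPi.pairwise_ofFn (hb : b ∈ BPi ℓ j) :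
    (List.ofFn b).Pairwise fun p q => bridgeHeight q < bridgeHeight p := by
  refine List.pairwise_ofFn.2 fun i k hik => ?_
  have : ((b k).2 (b k).1).2 < ((b i).2 (b i).1).2 := hb.2.2 hik
  rw [← (hb.1 i).natCast_bridgeHeight, ← (hb.1 k).natCast_bridgeHeight] at this
  exact_mod_cast this

theorem BPi.sum_map_fst_ofFn (hb : b ∈ BPi ℓ j) :
    ((List.ofFn b).map Prod.fst).sum = ℓ := by
  rw [List.map_ofFn, List.sum_ofFn]
  exact hb.2.1

theorem BPi.isBridge_appendWalks_ofFn (hb : b ∈ BPi ℓ j) :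
    IsBridge ℓ (appendWalks (List.ofFn b)) := by
  simpa only [BPi.sum_map_fst_ofFn hb] using isBridge_appendWalks (BPi.isBridge_of_mem_ofFn hb)

theorem BPi.sum_heightSet_ofFn_le (hb : b ∈ BPi ℓ j) : ∑ i ∈ heightSet (List.ofFn b), i ≤ ℓ := by
  simpa only [BPi.sum_map_fst_ofFn hb] using
    sum_heightSet_le (BPi.isBridge_of_mem_ofFn hb) (BPi.pairwise_ofFn hb)

end BPi

def setsWithSumLe (ℓ : ℕ) : Finset (Finset ℕ) :=
  (range (ℓ + 1)).powerset.filter fun S => ∑ i ∈ S, i ≤ ℓ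

theorem mem_setsWithSumLe {ℓ : ℕ} {S : Finset ℕ} : S ∈ setsWithSumLe ℓ ↔ ∑ i ∈ S, i ≤ ℓ := by
  refine ⟨fun h => (mem_filter.1 h).2, fun h => mem_filter.2 ⟨mem_powerset.2 fun i hi => ?_, h⟩⟩
  exact mem_range.2 (Nat.lt_succ_of_le ((single_le_sum (fun _ _ => Nat.zero_le _) hi).trans h))

theorem sum_card_filter_eq_le {α β : Type*} [DecidableEq β] (s : Finset α) (t : Finset β)
    (g : α → β) : ∑ y ∈ t, #{x ∈ s | g x = y} ≤ #s := by
  simpa only [← card_eq_sum_ones] using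
    sum_fiberwise_le_sum_of_sum_fiber_nonneg (t := t) (g := g) (f := fun _ => 1) fun _ _ =>
      Nat.zero_le _

theorem card_BPi_le (ℓ j : ℕ) :
    Nat.card (BPi ℓ j) ≤ cSAB ℓ * #{S ∈ setsWithSumLe ℓ | #S = j} := by
  rw [cSAB, ← Nat.card_eq_finsetCard, ← Nat.card_prod]
  refine Nat.card_le_card_of_injective (fun b =>
    (⟨appendWalks (List.ofFn b.1), BPi.isBridge_appendWalks_ofFn b.2⟩,
      ⟨heightSet (List.ofFn b.1), mem_filter.2 ⟨mem_setsWithSumLe.2 (BPi.sum_heightSet_ofFn_le b.2),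
        by rw [card_heightSet (BPi.pairwise_ofFn b.2), List.length_ofFn]⟩⟩)) ?_
  rintro ⟨b, hb⟩ ⟨b', hb'⟩ h
  simp only [Prod.mk.injEq, Subtype.mk.injEq] at h
  exact Subtype.ext <| List.ofFn_injective <| eq_of_appendWalks_eq
    (BPi.isBridge_of_mem_ofFn hb) (BPi.isBridge_of_mem_ofFn hb') (BPi.pairwise_ofFn hb)
    (BPi.pairwise_ofFn hb') (by rw [BPi.sum_map_fst_ofFn hb, BPi.sum_map_fst_ofFn hb']) h.1 h.2

theorem card_setsWithSumLe_mul_pow_le (ℓ : ℕ) {x : ℝ} (hx0 : 0 ≤ x) (hx1 : x < 1) :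
    (#(setsWithSumLe ℓ) : ℝ) * x ^ ℓ ≤ Real.exp (1 / (1 - x)) :=
  calc (#(setsWithSumLe ℓ) : ℝ) * x ^ ℓ ≤ ∑ S ∈ setsWithSumLe ℓ, x ^ (∑ i ∈ S, i) := by
        rw [← nsmul_eq_mul]
        exact card_nsmul_le_sum _ _ _ fun S hS =>
          pow_le_pow_of_le_one hx0 hx1.le (mem_setsWithSumLe.1 hS)
    _ ≤ ∑ S ∈ (range (ℓ + 1)).powerset, x ^ (∑ i ∈ S, i) :=
        sum_le_sum_of_subset_of_nonneg (filter_subset _ _) fun _ _ _ => by positivity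
    _ = ∏ k ∈ range (ℓ + 1), (1 + x ^ k) := by
        rw [prod_one_add]
        exact sum_congr rfl fun S _ => (prod_pow_eq_pow_sum S (fun i => i) x).symm
    _ ≤ Real.exp (∑ k ∈ range (ℓ + 1), x ^ k) :=
        Real.prod_one_add_le_exp_sum _ fun k => by positivity
    _ ≤ Real.exp (1 / (1 - x)) := by
        gcongr
        simpa [← range_eq_Ico] using geom_sum_Ico_le_of_lt_one (m := 0) (n := ℓ + 1) hx0 hx1

theorem card_setsWithSumLe_le {ℓ : ℕ} (hℓ : 1 ≤ ℓ) :
    (#(setsWithSumLe ℓ) : ℝ) ≤ Real.exp (3 * √ℓ) := by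
  set s := √(ℓ : ℝ)
  have hs : 1 ≤ s := Real.one_le_sqrt.2 (by exact_mod_cast hℓ)
  have hss : s * s = ℓ := Real.mul_self_sqrt (Nat.cast_nonneg ℓ)
  set x := Real.exp (-(1 / s))
  have hx1 : x < 1 := Real.exp_lt_one_iff.2 (neg_neg_of_pos (by positivity))
  have hxpow : x ^ ℓ = Real.exp (-s) := by
    rw [← Real.exp_nat_mul, ← hss]
    field_simp
  have hxs : x * (s + 1) ≤ s :=
    calc x * (s + 1) = s * (x * (1 / s + 1)) := by field_simp; ring
      _ ≤ s * (x * Real.exp (1 / s)) := by gcongr; exact Real.add_one_le_exp _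
      _ = s := by rw [← Real.exp_add, neg_add_cancel, Real.exp_zero, mul_one]
  have hgen : 1 / (1 - x) ≤ s + 1 := by
    rw [div_le_iff₀ (by linarith)]
    nlinarith
  have key := card_setsWithSumLe_mul_pow_le ℓ (Real.exp_pos _).le hx1
  rw [hxpow] at key
  calc (#(setsWithSumLe ℓ) : ℝ) = #(setsWithSumLe ℓ) * Real.exp (-s) * Real.exp s := by
        rw [mul_assoc, ← Real.exp_add, neg_add_cancel, Real.exp_zero, mul_one]
    _ ≤ Real.exp (s + 1) * Real.exp s := by gcongr; exact key.trans (Real.exp_le_exp.2 hgen)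
    _ ≤ Real.exp (3 * s) := by rw [← Real.exp_add]; gcongr; linarith

/-- There exists `C > 0` such that for all `ℓ ∈ ℕ` the total number of bridge-lists of
combined length `ℓ` with strictly decreasing heights is at most `exp(C ℓ^{1/2}) μ^ℓ`. -/
theorem bpi_total_card_le :
    ∃ C : ℝ, 0 < C ∧ ∀ ℓ : ℕ, 1 ≤ ℓ →
      (∑ j ∈ Finset.Icc 1 ℓ, (Nat.card ↥(BPi ℓ j) : ℝ))
        ≤ Real.exp (C * Real.sqrt ℓ) * mu ^ ℓ := by
  refine ⟨3, by norm_num, fun ℓ hℓ => ?_⟩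
  have hcount : ∑ j ∈ Icc 1 ℓ, Nat.card (BPi ℓ j) ≤ cSAB ℓ * #(setsWithSumLe ℓ) :=
    calc ∑ j ∈ Icc 1 ℓ, Nat.card (BPi ℓ j)
        ≤ ∑ j ∈ Icc 1 ℓ, cSAB ℓ * #{S ∈ setsWithSumLe ℓ | #S = j} :=
          sum_le_sum fun j _ => card_BPi_le ℓ j
      _ ≤ cSAB ℓ * #(setsWithSumLe ℓ) := by
          rw [← mul_sum]
          exact Nat.mul_le_mul_left _ (sum_card_filter_eq_le _ _ _)
  calc (∑ j ∈ Icc 1 ℓ, (Nat.card (BPi ℓ j) : ℝ)) ≤ cSAB ℓ * #(setsWithSumLe ℓ) := by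
        exact_mod_cast hcount
    _ ≤ cSAB ℓ * Real.exp (3 * √ℓ) := by gcongr; exact card_setsWithSumLe_le hℓ
    _ ≤ mu ^ ℓ * Real.exp (3 * √ℓ) := by gcongr; exact cSAB_le_mu_pow hℓ
    _ = Real.exp (3 * √ℓ) * mu ^ ℓ := mul_comm _ _
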